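/- arXiv:1003.4546 — 8 statements merged into one kernel-verified Lean document; each statement's English description precedes it below -/
import Mathlib

section
/- Let S and U be countable types, f : S → U a function, size : U → ℕ, and x > 0 a real number such that Z := ∑'_{u : U} x^(size u) satisfies 0 < Z < ∞. Assume that for every u : U the fiber f⁻¹({u}) is finite and has exactly (size u)! elements. Then ∑'_{s : S} x^(size (f s)) / (size (f s))! = Z, and the pushforward under f of the probability mass function on S given by s ↦ x^(size (f s)) / ((size (f s))! · Z) equals the probability mass function on U given by u ↦ x^(size u) / Z. -/
/-! Every symmetry lying over `u` carries the same weight `x ^ size u / (size u)!`, and there are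
`(size u)!` of them, so summing over a fiber of `f` turns the symmetry weight into the ordinary
weight `x ^ size u`. Summing over `S` fiber by fiber is legitimate in `ℝ` whether or not the sums
converge: a function constant on finite fibers has constant sign there, so it is absolutely
summable on `S` exactly when its fiber sums are summable on `U`. -/

lemma tsum_preimage_singleton_comp {G S U : Type*} [AddCommGroup G] [TopologicalSpace G]
    [IsTopologicalAddGroup G] [T2Space G] (f : S → U) (g : U → G) (u : U) :
    ∑' s : f ⁻¹' {u}, g (f s) = Nat.card (f ⁻¹' {u}) • g u := by
  rw [← tsum_const]
  exact tsum_congr fun ⟨_, hs⟩ ↦ congrArg g hs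

lemma summable_comp_iff_summable_natCard_preimage_smul {S U : Type*} (f : S → U)
    (hfin : ∀ u, (f ⁻¹' {u}).Finite) (g : U → ℝ) :
    Summable (fun s ↦ g (f s)) ↔ Summable fun u ↦ Nat.card (f ⁻¹' {u}) • g u := by
  have hfiber : ∀ u, Summable fun s : f ⁻¹' {u} ↦ |g (f s)| := fun u ↦
    have := (hfin u).to_subtype
    .of_finite
  rw [← summable_abs_iff, ← summable_abs_iff (f := fun u ↦ Nat.card (f ⁻¹' {u}) • g u),
    summable_partition (fun _ ↦ abs_nonneg _) (s := fun u ↦ f ⁻¹' {u})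
      fun s ↦ ⟨f s, rfl, fun _ h ↦ h.symm⟩]
  simp only [hfiber, implies_true, true_and,
    tsum_preimage_singleton_comp f (fun u ↦ |g u|), abs_nsmul]

lemma tsum_comp_eq_tsum_natCard_preimage_smul {S U : Type*} (f : S → U)
    (hfin : ∀ u, (f ⁻¹' {u}).Finite) (g : U → ℝ) :
    ∑' s, g (f s) = ∑' u, Nat.card (f ⁻¹' {u}) • g u := by
  by_cases hg : Summable fun s ↦ g (f s)
  · rw [← (hg.hasSum.tsum_fiberwise f).tsum_eq]
    exact tsum_congr fun u ↦ tsum_preimage_singleton_comp f g u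
  · rw [tsum_eq_zero_of_not_summable hg, tsum_eq_zero_of_not_summable
      ((summable_comp_iff_summable_natCard_preimage_smul f hfin g).not.mp hg)]

theorem stmt_0_general {S U : Type*}
    (f : S → U) (size : U → ℕ) (x : ℝ)
    (hfin : ∀ u : U, (f ⁻¹' {u}).Finite)
    (hcard : ∀ u : U, Nat.card (f ⁻¹' {u}) = (size u).factorial) :
    (∑' s : S, x ^ size (f s) / ((size (f s)).factorial : ℝ) = ∑' u : U, x ^ size u) ∧
    (∀ u : U,
      ∑' s : (f ⁻¹' {u}),
          x ^ size (f (s : S)) / (((size (f (s : S))).factorial : ℝ) * ∑' v : U, x ^ size v)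
        = x ^ size u / ∑' v : U, x ^ size v) := by
  constructor
  · rw [tsum_comp_eq_tsum_natCard_preimage_smul f hfin fun u ↦ x ^ size u / (size u).factorial]
    refine tsum_congr fun u ↦ ?_
    rw [hcard, nsmul_eq_mul, mul_div_cancel₀ _ (by positivity)]
  · intro u
    rw [tsum_preimage_singleton_comp f
      (fun v ↦ x ^ size v / ((size v).factorial * ∑' w, x ^ size w)), hcard, nsmul_eq_mul]
    field_simp

/-- Pólya–Boltzmann samplers extend ordinary Boltzmann samplers: if each
unlabeled structure `u` (of size `size u`) has exactly `(size u)!` preimages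
(symmetries) under `f`, then the symmetry weights `x^size/(size)!` sum to
`Z = ∑ x^(size u)`, and the pushforward under `f` of the normalized
symmetry distribution is the ordinary Boltzmann distribution. -/
theorem stmt_0 {S U : Type*} [Countable S] [Countable U]
    (f : S → U) (size : U → ℕ) (x : ℝ) (hx : 0 < x)
    (hsum : Summable fun u : U => x ^ size u)
    (hZpos : 0 < ∑' u : U, x ^ size u)
    (hfin : ∀ u : U, (f ⁻¹' {u}).Finite)
    (hcard : ∀ u : U, Nat.card (f ⁻¹' {u}) = (size u).factorial) :
    (∑' s : S, x ^ size (f s) / ((size (f s)).factorial : ℝ) = ∑' u : U, x ^ size u) ∧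
    (∀ u : U,
      ∑' s : (f ⁻¹' {u}),
          x ^ size (f (s : S)) / (((size (f (s : S))).factorial : ℝ) * ∑' v : U, x ^ size v)
        = x ^ size u / ∑' v : U, x ^ size v) :=
  stmt_0_general f size x hfin hcard
end

section
/- Let α and β be countable types, and let wA : α → ℝ and wB : β → ℝ be nonnegative weight functions such that ZA := ∑'_{a} wA a and ZB := ∑'_{b} wB b satisfy 0 < ZA < ∞ and 0 < ZB < ∞. Let PA be the probability mass function a ↦ wA a / ZA on α and PB the probability mass function b ↦ wB b / ZB on β. Then the mixture probability mass function on α ⊕ β that with probability ZA/(ZA+ZB) returns Sum.inl of a sample from PA and with probability ZB/(ZA+ZB) returns Sum.inr of a sample from PB assigns mass wA a/(ZA+ZB) to inl a and mass wB b/(ZA+ZB) to inr b; in particular it is the Boltzmann distribution for the combined weight Sum.elim wA wB, whose total sum is ZA + ZB. -/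
theorem stmt_1_general {α β : Type*}
    (wA : α → ℝ) (wB : β → ℝ)
    (hsA : Summable wA) (hsB : Summable wB)
    (hZA : 0 < ∑' a, wA a) (hZB : 0 < ∑' b, wB b) :
    (∀ a : α,
      ((∑' a, wA a) / ((∑' a, wA a) + (∑' b, wB b))) * (wA a / (∑' a, wA a))
        = wA a / ((∑' a, wA a) + (∑' b, wB b))) ∧
    (∀ b : β,
      ((∑' b, wB b) / ((∑' a, wA a) + (∑' b, wB b))) * (wB b / (∑' b, wB b))
        = wB b / ((∑' a, wA a) + (∑' b, wB b))) ∧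
    (∑' c : α ⊕ β, Sum.elim wA wB c = (∑' a, wA a) + (∑' b, wB b)) ∧
    (∀ c : α ⊕ β,
      Sum.elim
        (fun a => ((∑' a, wA a) / ((∑' a, wA a) + (∑' b, wB b))) * (wA a / (∑' a, wA a)))
        (fun b => ((∑' b, wB b) / ((∑' a, wA a) + (∑' b, wB b))) * (wB b / (∑' b, wB b))) c
        = Sum.elim wA wB c / ((∑' a, wA a) + (∑' b, wB b))) := by
  have mass_inl (a : α) := div_mul_div_cancel₀' hZA.ne' ((∑' a, wA a) + ∑' b, wB b) (wA a)
  have mass_inr (b : β) := div_mul_div_cancel₀' hZB.ne' ((∑' a, wA a) + ∑' b, wB b) (wB b)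
  refine ⟨mass_inl, mass_inr, Summable.tsum_sum (f := Sum.elim wA wB) hsA hsB, ?_⟩
  rintro (a | b)
  exacts [mass_inl a, mass_inr b]

/-- Correctness of the Boltzmann sampling rule for the Sum construction:
the Bernoulli mixture with probability `ZA/(ZA+ZB)` of the Boltzmann
distributions for `wA` and `wB` is the Boltzmann distribution for the
combined weight `Sum.elim wA wB`, whose total sum is `ZA + ZB`. -/
theorem stmt_1 {α β : Type*} [Countable α] [Countable β]
    (wA : α → ℝ) (wB : β → ℝ)
    (hwA : ∀ a, 0 ≤ wA a) (hwB : ∀ b, 0 ≤ wB b)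
    (hsA : Summable wA) (hsB : Summable wB)
    (hZA : 0 < ∑' a, wA a) (hZB : 0 < ∑' b, wB b) :
    (∀ a : α,
      ((∑' a, wA a) / ((∑' a, wA a) + (∑' b, wB b))) * (wA a / (∑' a, wA a))
        = wA a / ((∑' a, wA a) + (∑' b, wB b))) ∧
    (∀ b : β,
      ((∑' b, wB b) / ((∑' a, wA a) + (∑' b, wB b))) * (wB b / (∑' b, wB b))
        = wB b / ((∑' a, wA a) + (∑' b, wB b))) ∧
    (∑' c : α ⊕ β, Sum.elim wA wB c = (∑' a, wA a) + (∑' b, wB b)) ∧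
    (∀ c : α ⊕ β,
      Sum.elim
        (fun a => ((∑' a, wA a) / ((∑' a, wA a) + (∑' b, wB b))) * (wA a / (∑' a, wA a)))
        (fun b => ((∑' b, wB b) / ((∑' a, wA a) + (∑' b, wB b))) * (wB b / (∑' b, wB b))) c
        = Sum.elim wA wB c / ((∑' a, wA a) + (∑' b, wB b))) :=
  stmt_1_general wA wB hsA hsB hZA hZB
end

section
/- Let α and β be countable types, and let wA : α → ℝ and wB : β → ℝ be nonnegative weight functions such that ZA := ∑'_{a} wA a and ZB := ∑'_{b} wB b satisfy 0 < ZA < ∞ and 0 < ZB < ∞. Then ∑'_{(a,b) : α × β} wA a · wB b = ZA · ZB, and the product probability mass function on α × β of the Boltzmann distributions a ↦ wA a/ZA and b ↦ wB b/ZB (independent components) assigns mass wA a · wB b / (ZA · ZB) to (a,b); i.e., it is the Boltzmann distribution for the product weight (a,b) ↦ wA a · wB b. -/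
/-- Correctness of the Boltzmann sampling rule for the Product construction:
the product of the two Boltzmann distributions is the Boltzmann distribution
for the product weight, whose total sum is `ZA * ZB`. -/
theorem stmt_2 {α β : Type*} [Countable α] [Countable β]
    (wA : α → ℝ) (wB : β → ℝ)
    (hwA : ∀ a, 0 ≤ wA a) (hwB : ∀ b, 0 ≤ wB b)
    (hsA : Summable wA) (hsB : Summable wB)
    (hZA : 0 < ∑' a, wA a) (hZB : 0 < ∑' b, wB b) :
    (∑' p : α × β, wA p.1 * wB p.2 = (∑' a, wA a) * (∑' b, wB b)) ∧
    (∀ (a : α) (b : β),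
      (wA a / (∑' a, wA a)) * (wB b / (∑' b, wB b))
        = wA a * wB b / ((∑' a, wA a) * (∑' b, wB b))) := by
  refine ⟨?_, fun a b => by field_simp⟩
  have hA : Summable fun a => ‖wA a‖ := by simpa [Real.norm_eq_abs, abs_of_nonneg, hwA] using hsA
  have hB : Summable fun b => ‖wB b‖ := by simpa [Real.norm_eq_abs, abs_of_nonneg, hwB] using hsB
  exact (tsum_mul_tsum_of_summable_norm hA hB).symm
end

section
/- Let λ : ℕ → ℝ be nonnegative with ∑'_{j} λ j < ∞, and let P be the probability mass function on finitely supported functions ℕ →₀ ℕ defined by P(n) = exp(−∑'_{j} λ j) · ∏_{j ∈ n.support} (λ j)^(n j)/(n j)!. Then for every finite set J ⊆ ℕ and every function a : ℕ → ℕ, the P-probability of the event {n : ℕ →₀ ℕ | ∀ j ∈ J, n j = a j} equals ∏_{j ∈ J} exp(−λ j) · (λ j)^(a j)/(a j)!. In particular, under P the coordinates (n j) are independent and each n j is Poisson distributed with parameter λ j. -/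
/-!
Fixing `n = a` on `J` splits off the factor `∏ j ∈ J, λ j ^ a j / (a j)!` and leaves a free
profile supported off `J`. The total weight of the profiles supported in a set `s` is
`∏ j ∈ s, exp (λ j) = exp (∑' j : s, λ j)`: for a finite support bound this is a finite product
of exponential series, and in general it is the monotone limit over finite support bounds.
Working in `ℝ≥0∞` makes every sum exist, so the interchanges need no summability bookkeeping.
-/

open Finset Filter Topology
open scoped ENNReal Nat

theorem ENNReal.tsum_pi_prod {κ β : Type*} [Fintype κ] (f : κ → β → ℝ≥0∞) :
    ∑' x : κ → β, ∏ i, f i (x i) = ∏ i, ∑' b, f i b := by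
  revert f
  refine Fintype.induction_empty_option
    (P := fun κ _ => ∀ f : κ → β → ℝ≥0∞, ∑' x : κ → β, ∏ i, f i (x i) = ∏ i, ∑' b, f i b)
    ?_ ?_ ?_ κ
  · intro κ κ' _ e ih f
    let := Fintype.ofEquiv κ' e.symm
    rw [← (e.arrowCongr (Equiv.refl β)).tsum_eq, ← e.prod_comp]
    convert ih (fun i => f (e i)) using 3
    exact (Fintype.prod_equiv e _ _ fun i => by simp [Equiv.arrowCongr_apply]).symm
  · simp
  · intro κ _ ih f
    rw [← (Equiv.piOptionEquivProd (β := fun _ => β)).symm.tsum_eq, ENNReal.tsum_prod']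
    simp [Fintype.prod_option, ENNReal.tsum_mul_left, ENNReal.tsum_mul_right, ih]

namespace Finsupp

variable {ι M : Type*}

theorem tsum_prod_of_support_subset_finset [AddCommMonoid M] (f : ι → M → ℝ≥0∞)
    (hf : ∀ i, f i 0 = 1) (S : Finset ι) :
    ∑' n : {n : ι →₀ M // ↑n.support ⊆ (S : Set ι)}, n.1.prod f = ∏ i ∈ S, ∑' m, f i m := by
  classical
  have hprod (n : {n : ι →₀ M // ↑n.support ⊆ (S : Set ι)}) :
      n.1.prod f = ∏ i : S, f i (equivFunOnFinite (restrictSupportEquiv (S : Set ι) M n) i) := by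
    rw [← prod_subtypeDomain_index fun i hi => n.2 hi]
    exact prod_fintype _ _ fun i : S => hf i
  rw [tsum_congr hprod, ← Finset.prod_coe_sort, ← ENNReal.tsum_pi_prod]
  exact ((restrictSupportEquiv _ M).trans equivFunOnFinite).tsum_eq fun x => ∏ i : S, f i (x i)

theorem tendsto_tsum_support_subset [Zero M] (F : (ι →₀ M) → ℝ≥0∞) :
    Tendsto (fun S : Finset ι => ∑' n : {n : ι →₀ M // ↑n.support ⊆ (S : Set ι)}, F n) atTop
      (𝓝 (∑' n, F n)) := by
  classical
  have hmono : Monotone fun S : Finset ι =>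
      ∑' n : {n : ι →₀ M // ↑n.support ⊆ (S : Set ι)}, F n := fun S T hST =>
    ENNReal.tsum_mono_subtype F fun n hn => Set.Subset.trans hn (Finset.coe_subset.2 hST)
  convert tendsto_atTop_iSup hmono
  refine le_antisymm ?_
    (iSup_le fun S => ENNReal.tsum_comp_le_tsum_of_injective Subtype.val_injective F)
  rw [ENNReal.tsum_eq_iSup_sum]
  refine iSup_le fun A => le_iSup_of_le (A.sup support) ?_
  rw [← Finset.sum_subtype_of_mem F fun n hn =>
    Finset.coe_subset.2 (Finset.le_sup (f := support) hn)]
  exact ENNReal.sum_le_tsum _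

theorem prod_eq_prod_mul_prod_filter_notMem [Zero M] [DecidableEq ι] {N : Type*} [CommMonoid N]
    {g : ι → M → N} (hg : ∀ i, g i 0 = 1) (J : Finset ι) (n : ι →₀ M) :
    n.prod g = (∏ j ∈ J, g j (n j)) * (n.filter (· ∉ J)).prod g := by
  rw [← prod_filter_mul_prod_filter_not (· ∈ J),
    prod_of_support_subset _ (fun j hj => (Finset.mem_filter.1 hj).2) _ fun j _ => hg j]
  congr 1
  exact Finset.prod_congr rfl fun j hj => by rw [filter_apply_pos _ _ hj]

noncomputable def eqOnEquivSupportSubsetCompl [AddZeroClass M] [DecidableEq ι] (J : Finset ι)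
    (a : ι → M) :
    {n : ι →₀ M // ∀ j ∈ J, n j = a j} ≃ {m : ι →₀ M // ↑m.support ⊆ (↑J : Set ι)ᶜ} where
  toFun n := ⟨n.1.filter (· ∉ J), fun j hj => by
    simp only [Finset.mem_coe, support_filter, Finset.mem_filter] at hj
    exact hj.2⟩
  invFun m := ⟨m.1 + indicator J fun j _ => a j, fun j hj => by
    have : m.1 j = 0 := notMem_support_iff.1 fun h => m.2 h hj
    simp [this, indicator_apply, hj]⟩
  left_inv n := by
    ext j
    by_cases hj : j ∈ J <;> simp [indicator_apply, hj, n.2 j]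
  right_inv m := by
    ext j
    by_cases hj : j ∈ J
    · have : m.1 j = 0 := notMem_support_iff.1 fun h => m.2 h hj
      simp [hj, this]
    · simp [hj, indicator_apply]

end Finsupp

namespace Real

variable {ι : Type*} {μ : ι → ℝ}

theorem tsum_finsupp_prod_pow_div_factorial (h0 : ∀ i, 0 ≤ μ i) (hμ : Summable μ) :
    ∑' n : ι →₀ ℕ, n.prod (fun i c => μ i ^ c / c !) = exp (∑' i, μ i) := by
  have hterm (i : ι) (c : ℕ) : 0 ≤ μ i ^ c / c ! := by have := h0 i; positivity
  set g : ι → ℕ → ℝ≥0∞ := fun i c => ENNReal.ofReal (μ i ^ c / c !)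
  have hg (n : ι →₀ ℕ) : n.prod g = ENNReal.ofReal (n.prod fun i c => μ i ^ c / c !) :=
    (ENNReal.ofReal_prod_of_nonneg fun i _ => hterm i _).symm
  have hexp (i : ι) : ∑' c, g i c = ENNReal.ofReal (exp (μ i)) := by
    rw [← ENNReal.ofReal_tsum_of_nonneg (hterm i) (NormedSpace.expSeries_div_summable (μ i)),
      (NormedSpace.expSeries_div_hasSum_exp (μ i)).tsum_eq, exp_eq_exp_ℝ]
  have hfinite (S : Finset ι) : ∑' n : {n : ι →₀ ℕ // ↑n.support ⊆ (S : Set ι)}, n.1.prod g =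
      ENNReal.ofReal (exp (∑ i ∈ S, μ i)) := by
    rw [Finsupp.tsum_prod_of_support_subset_finset g (by simp [g]) S,
      Finset.prod_congr rfl fun i _ => hexp i,
      ← ENNReal.ofReal_prod_of_nonneg fun i _ => (exp_pos _).le, exp_sum]
  have hennreal : ∑' n : ι →₀ ℕ, n.prod g = ENNReal.ofReal (exp (∑' i, μ i)) :=
    tendsto_nhds_unique (Finsupp.tendsto_tsum_support_subset _) <| by
      simpa only [hfinite, Function.comp_def, SummationFilter.unconditional_filter] using
        ((ENNReal.continuous_ofReal.comp continuous_exp).tendsto _).comp hμ.hasSum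
  have hreal (n : ι →₀ ℕ) : n.prod (fun i c => μ i ^ c / c !) = (n.prod g).toReal := by
    rw [hg]
    exact (ENNReal.toReal_ofReal (Finset.prod_nonneg fun i _ => hterm i _)).symm
  rw [tsum_congr hreal, ← ENNReal.tsum_toReal_eq fun n => by simp [hg], hennreal,
    ENNReal.toReal_ofReal (exp_pos _).le]

theorem tsum_finsupp_prod_pow_div_factorial_of_support_subset (h0 : ∀ i, 0 ≤ μ i)
    (hμ : Summable μ) (s : Set ι) :
    ∑' n : {n : ι →₀ ℕ // ↑n.support ⊆ s}, n.1.prod (fun i c => μ i ^ c / c !) =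
      exp (∑' i : s, μ i) := by
  have hprod (n : {n : ι →₀ ℕ // ↑n.support ⊆ s}) : n.1.prod (fun i c => μ i ^ c / c !) =
      (Finsupp.restrictSupportEquiv s ℕ n).prod (fun i c => μ i ^ c / c !) :=
    (Finsupp.prod_subtypeDomain_index (h := fun i c => μ i ^ c / c !) fun i hi => n.2 hi).symm
  rw [tsum_congr hprod, (Finsupp.restrictSupportEquiv s ℕ).tsum_eq
    fun m => m.prod fun (i : s) c => μ i ^ c / c !]
  exact tsum_finsupp_prod_pow_div_factorial (μ := fun i : s => μ i) (fun i => h0 i)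
    (hμ.subtype s)

end Real

open Finsupp Real in
/-- Correctness of the Pólya–Boltzmann sampler Γ Z_Set: under the
Pólya–Boltzmann distribution on profiles `n : ℕ →₀ ℕ`, the coordinates are
independent Poisson variables: the probability that `n j = a j` for all
`j ∈ J` is `∏_{j ∈ J} exp(-λ j) (λ j)^(a j)/(a j)!`. -/
theorem stmt_4 (lam : ℕ → ℝ) (hnn : ∀ j, 0 ≤ lam j) (hsum : Summable lam)
    (J : Finset ℕ) (a : ℕ → ℕ) :
    ∑' n : {n : ℕ →₀ ℕ // ∀ j ∈ J, n j = a j},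
        Real.exp (-(∑' j, lam j)) *
          ∏ j ∈ (n : ℕ →₀ ℕ).support,
            lam j ^ ((n : ℕ →₀ ℕ) j) / (((n : ℕ →₀ ℕ) j).factorial : ℝ)
      = ∏ j ∈ J, Real.exp (-lam j) * lam j ^ a j / ((a j).factorial : ℝ) := by
  set C := ∏ j ∈ J, lam j ^ a j / (a j)!
  have hweight (n : {n : ℕ →₀ ℕ // ∀ j ∈ J, n j = a j}) :
      n.1.prod (fun j c => lam j ^ c / c !) =
        C * (eqOnEquivSupportSubsetCompl J a n).1.prod fun j c => lam j ^ c / c ! := by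
    rw [prod_eq_prod_mul_prod_filter_notMem (fun j => by simp) J,
      Finset.prod_congr rfl fun j hj => by rw [n.2 j hj]]
    rfl
  have hpoisson : ∏ j ∈ J, exp (-lam j) * lam j ^ a j / (a j)! = exp (-∑ j ∈ J, lam j) * C := by
    simp_rw [mul_div_assoc, Finset.prod_mul_distrib, ← exp_sum, Finset.sum_neg_distrib]
    rfl
  change ∑' n : {n : ℕ →₀ ℕ // ∀ j ∈ J, n j = a j},
    exp (-(∑' j, lam j)) * n.1.prod (fun j c => lam j ^ c / c !) = _
  simp_rw [hweight, mul_left_comm _ C, tsum_mul_left]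
  rw [(eqOnEquivSupportSubsetCompl J a).tsum_eq (fun m => m.1.prod fun j c => lam j ^ c / c !),
    tsum_finsupp_prod_pow_div_factorial_of_support_subset hnn hsum,
    ← hsum.tsum_subtype_add_tsum_subtype_compl J, Finset.tsum_subtype', hpoisson, neg_add,
    exp_add, mul_assoc, ← exp_add (-_), neg_add_cancel, exp_zero, mul_one, mul_comm]
end

section
/- Let λ : ℕ → ℝ be nonnegative with ∑'_{j} λ j < ∞, and let P be the probability mass function on finitely supported functions ℕ →₀ ℕ defined by P(n) = exp(−∑'_{j} λ j) · ∏_{j ∈ n.support} (λ j)^(n j)/(n j)!. Then for every k : ℕ, the P-probability of the event {n | ∀ j > k, n j = 0} equals exp(∑_{j ≤ k} λ j) / exp(∑'_{j} λ j). -/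
/-!
Restricted to profiles supported in `{0, …, k}`, the weight of `n` is the product over
`j ≤ k` of the Poisson weights `λ_j ^ n_j / n_j!`, so the sum over such profiles factors
into the product of the exponential series `∑ₘ λ_j ^ m / m! = exp λ_j`.
-/

open Finset

namespace Finsupp

variable {α M : Type*} [DecidableEq α] [AddZeroClass M]

noncomputable def supportSubsetInsertEquiv {a : α} {s : Finset α} (ha : a ∉ s) :
    {n : α →₀ M // n.support ⊆ insert a s} ≃ M × {n : α →₀ M // n.support ⊆ s} where
  toFun n := (n.1 a, ⟨n.1.erase a, by rw [support_erase, ← subset_insert_iff]; exact n.2⟩)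
  invFun p := ⟨p.2.1 + single a p.1, by
    refine support_add.trans (union_subset (p.2.2.trans (subset_insert a s)) ?_)
    exact support_single_subset.trans (singleton_subset_iff.2 (mem_insert_self a s))⟩
  left_inv n := Subtype.ext (erase_add_single a n.1)
  right_inv p := by
    have hpa : p.2.1 a = 0 := notMem_support_iff.1 fun h ↦ ha (p.2.2 h)
    refine Prod.ext (by simp [hpa]) (Subtype.ext ?_)
    show (p.2.1 + single a p.1).erase a = p.2.1
    rw [erase_add, erase_single, erase_of_notMem_support (by simpa using hpa), add_zero]

end Finsupp

variable {α : Type*} [DecidableEq α]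

theorem hasSum_prod_of_support_subset (s : Finset α) {f : α → ℕ → ℝ}
    (hf : ∀ j, Summable fun m ↦ ‖f j m‖) :
    HasSum (fun n : {n : α →₀ ℕ // n.support ⊆ s} ↦ ∏ j ∈ s, f j (n.1 j))
      (∏ j ∈ s, ∑' m, f j m) := by
  induction s using Finset.induction_on generalizing f with
  | empty =>
    simp only [prod_empty]
    exact hasSum_single ⟨0, by simp⟩ fun n hn ↦
      (hn (Subtype.ext (Finsupp.support_eq_empty.1 (subset_empty.1 n.2)))).elim
  | insert a s ha ih =>
    -- `f` is generalized so that the induction hypothesis, applied to `‖f‖`, yields the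
    -- absolute summability that the product of the two series needs.
    have hnorm : Summable fun n : {n : α →₀ ℕ // n.support ⊆ s} ↦ ‖∏ j ∈ s, f j (n.1 j)‖ := by
      simpa only [norm_prod] using
        (ih (f := fun j m ↦ ‖f j m‖) fun j ↦ by simpa only [norm_norm] using hf j).summable
    have hprod := summable_mul_of_summable_norm (hf a) hnorm
    have hmul := (hf a).of_norm.hasSum.mul (ih hf) hprod
    rw [prod_insert ha]
    refine (Finsupp.supportSubsetInsertEquiv ha).hasSum_iff.2 hmul |>.congr_fun fun n ↦ ?_
    simp only [Function.comp_apply, Finsupp.supportSubsetInsertEquiv, Equiv.coe_fn_mk,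
      prod_insert ha]
    congr 1
    refine prod_congr rfl fun j hj ↦ ?_
    rw [Finsupp.erase_ne (ne_of_mem_of_not_mem hj ha)]

theorem hasSum_prod_pow_div_factorial (s : Finset α) (lam : α → ℝ) :
    HasSum (fun n : {n : α →₀ ℕ // n.support ⊆ s} ↦
        ∏ j ∈ (n : α →₀ ℕ).support, lam j ^ (n : α →₀ ℕ) j / ((n : α →₀ ℕ) j).factorial)
      (Real.exp (∑ j ∈ s, lam j)) := by
  have hexp : ∀ x : ℝ, ∑' m : ℕ, x ^ m / (m.factorial : ℝ) = Real.exp x := fun x ↦ by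
    rw [Real.exp_eq_exp_ℝ, NormedSpace.exp_eq_tsum_div]
  rw [Real.exp_sum, ← prod_congr rfl fun j _ ↦ hexp (lam j)]
  refine (hasSum_prod_of_support_subset s fun j ↦ ?_).congr_fun fun n ↦ ?_
  · simpa using Real.summable_pow_div_factorial |lam j|
  · exact Finsupp.prod_of_support_subset _ n.2 (fun j m ↦ lam j ^ m / (m.factorial : ℝ))
      fun j _ ↦ by simp

theorem stmt_5_general (lam : ℕ → ℝ) (k : ℕ) :
    ∑' n : {n : ℕ →₀ ℕ // ∀ j, k < j → n j = 0},
        Real.exp (-(∑' j, lam j)) *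
          ∏ j ∈ (n : ℕ →₀ ℕ).support,
            lam j ^ ((n : ℕ →₀ ℕ) j) / (((n : ℕ →₀ ℕ) j).factorial : ℝ)
      = Real.exp (∑ j ∈ Finset.Iic k, lam j) / Real.exp (∑' j, lam j) := by
  have hsupp : ∀ n : ℕ →₀ ℕ, (∀ j, k < j → n j = 0) ↔ n.support ⊆ Iic k := fun n ↦ by
    simp only [subset_iff, Finsupp.mem_support_iff, mem_Iic]
    exact forall_congr' fun j ↦ not_imp_not.symm.trans (by rw [not_lt])
  have hS := (Equiv.subtypeEquivRight hsupp).hasSum_iff.2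
    (hasSum_prod_pow_div_factorial (Iic k) lam)
  rw [tsum_mul_left, Real.exp_neg, div_eq_mul_inv, mul_comm, ← hS.tsum_eq]
  rfl

/-- Justification of the Max_Index distribution in the sampler Γ Z_Set:
under the Pólya–Boltzmann distribution on profiles `n : ℕ →₀ ℕ`, the
probability that all coordinates beyond `k` vanish is
`exp (∑_{j ≤ k} λ j) / exp (∑_j λ j)`. -/
theorem stmt_5 (lam : ℕ → ℝ) (hnn : ∀ j, 0 ≤ lam j) (hsum : Summable lam) (k : ℕ) :
    ∑' n : {n : ℕ →₀ ℕ // ∀ j, k < j → n j = 0},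
        Real.exp (-(∑' j, lam j)) *
          ∏ j ∈ (n : ℕ →₀ ℕ).support,
            lam j ^ ((n : ℕ →₀ ℕ) j) / (((n : ℕ →₀ ℕ) j).factorial : ℝ)
      = Real.exp (∑ j ∈ Finset.Iic k, lam j) / Real.exp (∑' j, lam j) :=
  stmt_5_general lam k
end

section
/- Let s : ℕ → ℝ satisfy 0 ≤ s r < 1 for every r ≥ 1, and suppose that the series ∑_{r ≥ 1} (φ(r)/r) · log(1/(1 − s r)) converges, where φ is Euler's totient function. Then the family indexed by n ≥ 1 of the terms (1/n) · ∑_{d ∣ n} φ(d) · (s d)^(n/d) is summable, and ∑_{n ≥ 1} (1/n) ∑_{d ∣ n} φ(d) (s d)^(n/d) = ∑_{r ≥ 1} (φ(r)/r) · log(1/(1 − s r)). -/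
/-!
Expanding `log (1 / (1 - s r)) = ∑_{k ≥ 1} (s r)^k / k` writes the right-hand side as the sum of
the nonnegative double family `φ(r) (s r)^k / (r k)` over `r, k ≥ 1`. Nonnegativity makes this
family summable, so it can be regrouped along `n = r k`; the terms with `r k = n` add up to
`(1/n) ∑_{d ∣ n} φ(d) (s d)^(n/d)`.
-/

open scoped Nat

theorem HasSum.prod_of_fiberwise_of_nonneg {β γ : Type*} {f : β × γ → ℝ} {g : β → ℝ} {a : ℝ}
    (hf : 0 ≤ f) (hfib : ∀ b, HasSum (fun c ↦ f (b, c)) (g b)) (hg : HasSum g a) :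
    HasSum f a := by
  have hsum : Summable f := (summable_prod_of_nonneg hf).2
    ⟨fun b ↦ (hfib b).summable, by simpa only [(hfib _).tsum_eq] using hg.summable⟩
  rw [← (hsum.hasSum.prod_fiberwise hfib).unique hg]
  exact hsum.hasSum

theorem HasSum.sum_divisors {α : Type*} [AddCommMonoid α] [TopologicalSpace α] [ContinuousAdd α]
    [RegularSpace α] {f : ℕ → ℕ → α} {a : α} (h : HasSum (fun p : ℕ+ × ℕ+ ↦ f p.1 p.2) a) :
    HasSum (fun n : ℕ+ ↦ ∑ d ∈ (n : ℕ).divisors, f d (n / d)) a := by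
  refine (sigmaAntidiagonalEquivProd.hasSum_iff.2 h).sigma fun n ↦ ?_
  rw [← Nat.sum_divisorsAntidiagonal, ← Finset.sum_coe_sort]
  exact hasSum_fintype _

theorem Real.hasSum_pow_div_log_pnat {x : ℝ} (h : |x| < 1) :
    HasSum (fun k : ℕ+ ↦ x ^ (k : ℕ) / k) (-Real.log (1 - x)) :=
  hasSum_pnat_iff_hasSum_succ (f := fun k : ℕ ↦ x ^ k / k).2 <| by
    simpa only [Nat.cast_succ] using Real.hasSum_pow_div_log_of_abs_lt_one h

theorem hasSum_totient_mul_pow_div {x : ℝ} (h : |x| < 1) (r : ℕ) :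
    HasSum (fun k : ℕ+ ↦ φ r * x ^ (k : ℕ) / (r * k : ℕ))
      (φ r / r * Real.log (1 / (1 - x))) := by
  rw [one_div, Real.log_inv]
  refine ((Real.hasSum_pow_div_log_pnat h).mul_left (φ r / r : ℝ)).congr_fun fun k ↦ ?_
  push_cast
  ring

theorem sum_divisors_totient_mul_pow_div (s : ℕ → ℝ) (n : ℕ) :
    ∑ d ∈ n.divisors, φ d * s d ^ (n / d) / (d * (n / d) : ℕ)
      = 1 / n * ∑ d ∈ n.divisors, φ d * s d ^ (n / d) := by
  rw [Finset.mul_sum]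
  refine Finset.sum_congr rfl fun d hd ↦ ?_
  rw [Nat.mul_div_cancel' (Nat.dvd_of_mem_divisors hd), one_div_mul_eq_div]

theorem hasSum_cycleIndex_cyc {s : ℕ → ℝ} (hs₀ : ∀ r : ℕ+, 0 ≤ s r) (hs₁ : ∀ r : ℕ+, s r < 1)
    {Z : ℝ} (hZ : HasSum (fun r : ℕ+ ↦ (φ r / r : ℝ) * Real.log (1 / (1 - s r))) Z) :
    HasSum (fun n : ℕ+ ↦ 1 / (n : ℝ) * ∑ d ∈ (n : ℕ).divisors, φ d * s d ^ (n / d : ℕ)) Z := by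
  have hs (r : ℕ+) : |s r| < 1 := abs_lt.2 ⟨by linarith [hs₀ r], hs₁ r⟩
  have hweight : 0 ≤ fun p : ℕ+ × ℕ+ ↦ φ p.1 * s p.1 ^ (p.2 : ℕ) / (p.1 * p.2 : ℕ) :=
    fun p ↦ by have := hs₀ p.1; positivity
  have hregroup := HasSum.sum_divisors (f := fun r k ↦ φ r * s r ^ k / (r * k : ℕ))
    (.prod_of_fiberwise_of_nonneg hweight (fun r ↦ hasSum_totient_mul_pow_div (hs r) r) hZ)
  simpa only [sum_divisors_totient_mul_pow_div] using hregroup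

/-- The cycle index sum of the species Cyc: the total weight
`(1/n) ∑_{d ∣ n} φ(d) s_d^{n/d}` of symmetries on cycles of size `n`,
summed over all `n ≥ 1`, equals the regrouped sum
`∑_{r ≥ 1} (φ(r)/r) log(1/(1-s_r))` over the automorphism order `r`. -/
theorem stmt_6 (s : ℕ → ℝ) (h0 : ∀ r, 1 ≤ r → 0 ≤ s r) (h1 : ∀ r, 1 ≤ r → s r < 1)
    (hZ : Summable fun r : {r : ℕ // 1 ≤ r} =>
      ((Nat.totient (r : ℕ) : ℝ) / ((r : ℕ) : ℝ)) * Real.log (1 / (1 - s (r : ℕ)))) :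
    Summable (fun n : {n : ℕ // 1 ≤ n} =>
      (1 / ((n : ℕ) : ℝ)) *
        ∑ d ∈ (n : ℕ).divisors, (Nat.totient d : ℝ) * s d ^ ((n : ℕ) / d)) ∧
    ∑' n : {n : ℕ // 1 ≤ n},
        (1 / ((n : ℕ) : ℝ)) *
          ∑ d ∈ (n : ℕ).divisors, (Nat.totient d : ℝ) * s d ^ ((n : ℕ) / d)
      = ∑' r : {r : ℕ // 1 ≤ r},
          ((Nat.totient (r : ℕ) : ℝ) / ((r : ℕ) : ℝ)) * Real.log (1 / (1 - s (r : ℕ))) := by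
  let e : {n : ℕ // 1 ≤ n} ≃ ℕ+ :=
    Equiv.subtypeEquivRight fun _ ↦ Nat.one_le_iff_ne_zero.trans Nat.pos_iff_ne_zero.symm
  have hcyc := e.hasSum_iff.2 <|
    hasSum_cycleIndex_cyc (fun r ↦ h0 r r.2) (fun r ↦ h1 r r.2) (e.symm.hasSum_iff.2 hZ.hasSum)
  exact ⟨hcyc.summable, hcyc.tsum_eq⟩
end

section
/- Let s : ℕ → ℝ satisfy 0 ≤ s r < 1 for every r ≥ 1, and suppose Z := ∑_{r ≥ 1} (φ(r)/r) · log(1/(1 − s r)) satisfies 0 < Z < ∞, where φ is Euler's totient function. Define q : {r : ℕ // r ≥ 1} × {j : ℕ // j ≥ 1} → ℝ by q(r, j) = φ(r) · (s r)^j / (r · j · Z). Then q is a probability mass function (nonnegative with total sum 1), and its pushforward under the map (r, j) ↦ r · j assigns to each n ≥ 1 the mass (1/(n·Z)) · ∑_{d ∣ n} φ(d) · (s d)^(n/d). -/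
/-!
For fixed `r`, the series `∑_{j ≥ 1} s_r^j / j` is the logarithmic series `log (1 / (1 - s_r))`,
so summing `φ(r) s_r^j / (r j)` first over `j` and then over `r` gives exactly `Z`; for nonnegative
terms this iterated sum is the sum over pairs. The pairs with `r j = n` are the pairs `(d, n / d)`
with `d ∣ n`, on which the denominator `r j Z` is the constant `n Z`.
-/

theorem Real.hasSum_pow_div_log_one_div_one_sub {x : ℝ} (hx : |x| < 1) :
    HasSum (fun j : {j : ℕ // 1 ≤ j} => x ^ (j : ℕ) / (j : ℕ)) (Real.log (1 / (1 - x))) := by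
  have hsupp : Function.support (fun j : ℕ => x ^ j / (j : ℝ)) ⊆ {j | 1 ≤ j} := by
    intro j hj
    rcases Nat.eq_zero_or_pos j with rfl | hpos
    · simp at hj
    · exact hpos
  refine (hasSum_subtype_iff_of_support_subset hsupp).2 ?_
  rw [← hasSum_nat_add_iff' 1]
  simpa [Real.log_inv] using Real.hasSum_pow_div_log_of_abs_lt_one hx

theorem hasSum_mul_pow_div_of_summable_mul_log {α : Type*} {c x : α → ℝ} (hc : ∀ a, 0 ≤ c a)
    (hx0 : ∀ a, 0 ≤ x a) (hx1 : ∀ a, x a < 1)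
    (hsum : Summable fun a => c a * Real.log (1 / (1 - x a))) :
    HasSum (fun p : α × {j : ℕ // 1 ≤ j} => c p.1 * (x p.1 ^ (p.2 : ℕ) / (p.2 : ℕ)))
      (∑' a, c a * Real.log (1 / (1 - x a))) := by
  have hfiber a : HasSum (fun j : {j : ℕ // 1 ≤ j} => c a * (x a ^ (j : ℕ) / (j : ℕ)))
      (c a * Real.log (1 / (1 - x a))) :=
    (Real.hasSum_pow_div_log_one_div_one_sub
      (by rw [abs_of_nonneg (hx0 a)]; exact hx1 a)).mul_left (c a)
  have hnonneg : 0 ≤ fun p : α × {j : ℕ // 1 ≤ j} => c p.1 * (x p.1 ^ (p.2 : ℕ) / (p.2 : ℕ)) :=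
    fun p => mul_nonneg (hc _) (div_nonneg (pow_nonneg (hx0 _) _) (Nat.cast_nonneg _))
  have hsummable := (summable_prod_of_nonneg hnonneg).2
    ⟨fun a => (hfiber a).summable, hsum.congr fun a => (hfiber a).tsum_eq.symm⟩
  rw [(hsummable.hasSum.prod_fiberwise hfiber).tsum_eq]
  exact hsummable.hasSum

def Nat.mulFiberEquivDivisorsAntidiagonal {n : ℕ} (hn : n ≠ 0) :
    {p : {r : ℕ // 1 ≤ r} × {j : ℕ // 1 ≤ j} // (p.1 : ℕ) * p.2 = n} ≃ n.divisorsAntidiagonal where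
  toFun p := ⟨((p.1.1 : ℕ), (p.1.2 : ℕ)), Nat.mem_divisorsAntidiagonal.2 ⟨p.2, hn⟩⟩
  invFun x := ⟨(⟨x.1.1, Nat.pos_of_mem_divisors (Nat.fst_mem_divisors_of_mem_antidiagonal x.2)⟩,
      ⟨x.1.2, Nat.pos_of_mem_divisors (Nat.snd_mem_divisors_of_mem_antidiagonal x.2)⟩),
    (Nat.mem_divisorsAntidiagonal.1 x.2).1⟩
  left_inv _ := rfl
  right_inv _ := rfl

theorem Nat.tsum_mulFiber_eq_sum_divisors {M : Type*} [AddCommMonoid M] [TopologicalSpace M]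
    (f : ℕ → ℕ → M) {n : ℕ} (hn : n ≠ 0) :
    ∑' p : {p : {r : ℕ // 1 ≤ r} × {j : ℕ // 1 ≤ j} // (p.1 : ℕ) * p.2 = n}, f p.1.1 p.1.2 =
      ∑ d ∈ n.divisors, f d (n / d) := by
  rw [← (Nat.mulFiberEquivDivisorsAntidiagonal hn).symm.tsum_eq, tsum_fintype]
  exact (Finset.sum_coe_sort _ fun x : ℕ × ℕ => f x.1 x.2).trans (Nat.sum_divisorsAntidiagonal f)

/-- Correctness of the Pólya–Boltzmann sampler Γ Z_Cyc at the level of sizes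
and automorphism orders: `q (r, j) = φ(r) s_r^j / (r j Z)` is a probability
mass function on pairs (replication order, Loga value), and its pushforward
under `(r, j) ↦ r * j` assigns to each `n ≥ 1` the mass
`(1/(n Z)) ∑_{d ∣ n} φ(d) s_d^{n/d}`. -/
theorem stmt_7 (s : ℕ → ℝ) (h0 : ∀ r, 1 ≤ r → 0 ≤ s r) (h1 : ∀ r, 1 ≤ r → s r < 1)
    (Z : ℝ)
    (hZdef : Z = ∑' r : {r : ℕ // 1 ≤ r},
      ((Nat.totient (r : ℕ) : ℝ) / ((r : ℕ) : ℝ)) * Real.log (1 / (1 - s (r : ℕ))))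
    (hZsum : Summable fun r : {r : ℕ // 1 ≤ r} =>
      ((Nat.totient (r : ℕ) : ℝ) / ((r : ℕ) : ℝ)) * Real.log (1 / (1 - s (r : ℕ))))
    (hZpos : 0 < Z)
    (q : {r : ℕ // 1 ≤ r} × {j : ℕ // 1 ≤ j} → ℝ)
    (hqdef : ∀ p : {r : ℕ // 1 ≤ r} × {j : ℕ // 1 ≤ j},
      q p = (Nat.totient (p.1 : ℕ) : ℝ) * s (p.1 : ℕ) ^ (p.2 : ℕ)
              / (((p.1 : ℕ) : ℝ) * ((p.2 : ℕ) : ℝ) * Z)) :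
    (∀ p, 0 ≤ q p) ∧ Summable q ∧ (∑' p, q p = 1) ∧
    (∀ n : ℕ, 1 ≤ n →
      ∑' p : {p : {r : ℕ // 1 ≤ r} × {j : ℕ // 1 ≤ j} //
                ((p.1 : ℕ)) * ((p.2 : ℕ)) = n},
          q (p : {r : ℕ // 1 ≤ r} × {j : ℕ // 1 ≤ j})
        = (1 / (((n : ℝ)) * Z)) *
            ∑ d ∈ n.divisors, (Nat.totient d : ℝ) * s d ^ (n / d)) := by
  have hq : HasSum q 1 := by
    have hweights := (hasSum_mul_pow_div_of_summable_mul_log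
      (c := fun r : {r : ℕ // 1 ≤ r} => (Nat.totient r : ℝ) / r) (x := fun r => s r)
      (fun r => by positivity) (fun r => h0 r r.2) (fun r => h1 r r.2) hZsum).div_const Z
    rw [← hZdef, div_self hZpos.ne'] at hweights
    refine hweights.congr_fun fun p => ?_
    rw [hqdef]
    ring
  have hq_nonneg p : 0 ≤ q p := by
    rw [hqdef]
    exact div_nonneg (mul_nonneg (Nat.cast_nonneg _) (pow_nonneg (h0 _ p.1.2) _)) (by positivity)
  refine ⟨hq_nonneg, hq.summable, hq.tsum_eq, fun n hn => ?_⟩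
  calc _ = ∑' p : {p : {r : ℕ // 1 ≤ r} × {j : ℕ // 1 ≤ j} // (p.1 : ℕ) * p.2 = n},
        (Nat.totient p.1.1 : ℝ) * s p.1.1 ^ (p.1.2 : ℕ) / (n * Z) :=
        tsum_congr fun p => by rw [hqdef, ← Nat.cast_mul, p.2]
    _ = ∑ d ∈ n.divisors, (Nat.totient d : ℝ) * s d ^ (n / d) / (n * Z) :=
        Nat.tsum_mulFiber_eq_sum_divisors (fun r j => (Nat.totient r : ℝ) * s r ^ j / (n * Z))
          (by omega)
    _ = _ := by rw [← Finset.sum_div, one_div_mul_eq_div]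
end

section
/- Let p : ℕ → ℝ be nonnegative with ∑'_{k} p k = 1, and let c > 0 be such that p k ≤ c · k^(−3/2) for every k ≥ 1. Then for every n ≥ 1, the family k ↦ min(k, n) · p k is summable and ∑'_{k} min(k, n) · p k ≤ 4 · c · √n. -/
/-!
Split the sum at `n`. For `k ≤ n` the terms are at most `c / √k`, and `∑_{k ≤ n} 1 / √k ≤ 2 √n`;
for `k > n` they are at most `c n k^{-3/2}`, and `∑_{k > n} k^{-3/2} ≤ 2 / √n`. Both sums telescope,
through `1 / √(x + 1) ≤ 2 (√(x + 1) - √x)` and `(x + 1)^{-3/2} ≤ 2 (1 / √x - 1 / √(x + 1))`.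
-/

open Finset Real

lemma rpow_neg_three_halves {x : ℝ} (hx : 0 ≤ x) : x ^ (-(3 / 2) : ℝ) = (x * √x)⁻¹ := by
  rw [rpow_neg hx, show (3 / 2 : ℝ) = 1 + 1 / 2 by norm_num, rpow_add' hx (by norm_num),
    rpow_one, ← sqrt_eq_rpow]

lemma one_le_two_mul_sqrt_mul_sqrt_succ_sub {x : ℝ} (hx : 0 ≤ x) :
    1 ≤ 2 * √(x + 1) * (√(x + 1) - √x) := by
  have hle : √x ≤ √(x + 1) := sqrt_le_sqrt (by linarith)
  have hsq : √(x + 1) ^ 2 = √x ^ 2 + 1 := by rw [sq_sqrt (by linarith), sq_sqrt hx]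
  nlinarith

lemma inv_sqrt_succ_le {x : ℝ} (hx : 0 ≤ x) : (√(x + 1))⁻¹ ≤ 2 * (√(x + 1) - √x) := by
  have hpos : 0 < √(x + 1) := sqrt_pos.2 (by linarith)
  rw [inv_le_iff_one_le_mul₀' hpos]
  linarith [one_le_two_mul_sqrt_mul_sqrt_succ_sub hx]

lemma inv_mul_sqrt_succ_le {x : ℝ} (hx : 0 < x) :
    ((x + 1) * √(x + 1))⁻¹ ≤ 2 * ((√x)⁻¹ - (√(x + 1))⁻¹) := by
  have ha : 0 < √x := sqrt_pos.2 hx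
  have hb : 0 < √(x + 1) := sqrt_pos.2 (by linarith)
  have hle : √x ≤ √(x + 1) := sqrt_le_sqrt (by linarith)
  have h1 := one_le_two_mul_sqrt_mul_sqrt_succ_sub hx.le
  have hsq : x + 1 = √(x + 1) ^ 2 := (sq_sqrt (by linarith)).symm
  rw [inv_sub_inv ha.ne' hb.ne', inv_eq_one_div, ← mul_div_assoc,
    div_le_div_iff₀ (by positivity) (by positivity)]
  nlinarith [mul_le_mul_of_nonneg_left h1 (by linarith : 0 ≤ x + 1),
    mul_le_mul_of_nonneg_right hle hb.le]

lemma sum_range_inv_sqrt_succ_le (N : ℕ) : ∑ k ∈ range N, (√((k : ℝ) + 1))⁻¹ ≤ 2 * √N :=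
  calc ∑ k ∈ range N, (√((k : ℝ) + 1))⁻¹
      ≤ ∑ k ∈ range N, (2 * √((k + 1 : ℕ) : ℝ) - 2 * √(k : ℝ)) :=
        sum_le_sum fun k _ => by push_cast; linarith [inv_sqrt_succ_le k.cast_nonneg]
    _ = 2 * √N := by rw [sum_range_sub (fun k : ℕ => 2 * √(k : ℝ))]; simp

lemma sum_range_inv_mul_sqrt_le {x : ℝ} (hx : 0 < x) (N : ℕ) :
    ∑ k ∈ range N, ((x + k + 1) * √(x + k + 1))⁻¹ ≤ 2 * (√x)⁻¹ :=
  calc ∑ k ∈ range N, ((x + k + 1) * √(x + k + 1))⁻¹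
      ≤ ∑ k ∈ range N, (-2 * (√(x + (k + 1 : ℕ)))⁻¹ - -2 * (√(x + k))⁻¹) :=
        sum_le_sum fun k _ => by
          push_cast
          rw [← add_assoc]
          linarith [inv_mul_sqrt_succ_le (by positivity : 0 < x + k)]
    _ ≤ 2 * (√x)⁻¹ := by
        rw [sum_range_sub (fun k : ℕ => -2 * (√(x + k))⁻¹)]
        simp only [Nat.cast_zero, add_zero]
        linarith [inv_nonneg.2 (sqrt_nonneg (x + N))]

lemma sum_range_succ_min_mul_rpow_le (n : ℕ) :
    ∑ k ∈ range (n + 1), ((min k n : ℕ) : ℝ) * (k : ℝ) ^ (-(3 / 2) : ℝ) ≤ 2 * √n := by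
  rw [sum_range_succ', Nat.zero_min, Nat.cast_zero, zero_mul, add_zero]
  calc ∑ k ∈ range n, ((min (k + 1) n : ℕ) : ℝ) * ((k + 1 : ℕ) : ℝ) ^ (-(3 / 2) : ℝ)
      = ∑ k ∈ range n, (√((k : ℝ) + 1))⁻¹ := sum_congr rfl fun k hk => by
        rw [min_eq_left (mem_range.1 hk), rpow_neg_three_halves (by positivity), Nat.cast_succ]
        field_simp
    _ ≤ 2 * √n := sum_range_inv_sqrt_succ_le n

lemma sum_range_min_add_mul_rpow_le (n N : ℕ) :
    ∑ k ∈ range N, ((min (n + 1 + k) n : ℕ) : ℝ) * ((n + 1 + k : ℕ) : ℝ) ^ (-(3 / 2) : ℝ)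
      ≤ 2 * √n := by
  rcases n.eq_zero_or_pos with rfl | hn
  · simp
  have hn' : (0 : ℝ) < n := by exact_mod_cast hn
  calc ∑ k ∈ range N, ((min (n + 1 + k) n : ℕ) : ℝ) * ((n + 1 + k : ℕ) : ℝ) ^ (-(3 / 2) : ℝ)
      = n * ∑ k ∈ range N, ((n + k + 1) * √(n + k + 1))⁻¹ := by
        rw [mul_sum]
        refine sum_congr rfl fun k _ => ?_
        rw [min_eq_right (by omega), rpow_neg_three_halves (by positivity)]
        push_cast
        ring_nf
    _ ≤ n * (2 * (√n)⁻¹) := by gcongr; exact sum_range_inv_mul_sqrt_le hn' N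
    _ = 2 * √n := by
        rw [← div_eq_mul_inv, mul_div_left_comm, div_sqrt]

lemma sum_range_min_mul_rpow_le (n N : ℕ) :
    ∑ k ∈ range N, ((min k n : ℕ) : ℝ) * (k : ℝ) ^ (-(3 / 2) : ℝ) ≤ 4 * √n :=
  calc ∑ k ∈ range N, ((min k n : ℕ) : ℝ) * (k : ℝ) ^ (-(3 / 2) : ℝ)
      ≤ ∑ k ∈ range (n + 1 + N), ((min k n : ℕ) : ℝ) * (k : ℝ) ^ (-(3 / 2) : ℝ) :=
        sum_le_sum_of_subset_of_nonneg (range_subset_range.2 (by omega))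
          fun _ _ _ => by positivity
    _ ≤ 2 * √n + 2 * √n := by
        rw [sum_range_add]
        exact add_le_add (sum_range_succ_min_mul_rpow_le n) (sum_range_min_add_mul_rpow_le n N)
    _ = 4 * √n := by ring

theorem stmt_11_general (p : ℕ → ℝ) (hnn : ∀ k, 0 ≤ p k)
    (c : ℝ) (hc : 0 < c)
    (hbound : ∀ k : ℕ, 1 ≤ k → p k ≤ c * (k : ℝ) ^ (-(3 / 2) : ℝ)) :
    ∀ n : ℕ, 1 ≤ n →
      Summable (fun k : ℕ => ((min k n : ℕ) : ℝ) * p k) ∧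
      ∑' k : ℕ, ((min k n : ℕ) : ℝ) * p k ≤ 4 * c * Real.sqrt n := by
  intro n _
  set g : ℕ → ℝ := fun k => ((min k n : ℕ) : ℝ) * (k : ℝ) ^ (-(3 / 2) : ℝ)
  have hg_nonneg : ∀ k, 0 ≤ g k := fun k => by positivity
  have hg : Summable g := summable_of_sum_range_le hg_nonneg (sum_range_min_mul_rpow_le n)
  have hle : ∀ k, ((min k n : ℕ) : ℝ) * p k ≤ c * g k := fun k => by
    rcases k.eq_zero_or_pos with rfl | hk
    · simp [g]
    calc ((min k n : ℕ) : ℝ) * p k ≤ (min k n : ℕ) * (c * (k : ℝ) ^ (-(3 / 2) : ℝ)) :=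
          mul_le_mul_of_nonneg_left (hbound k hk) (by positivity)
      _ = c * g k := mul_left_comm _ _ _
  have hsummable : Summable fun k => ((min k n : ℕ) : ℝ) * p k :=
    (hg.mul_left c).of_nonneg_of_le (fun k => mul_nonneg (by positivity) (hnn k)) hle
  refine ⟨hsummable, ?_⟩
  calc ∑' k, ((min k n : ℕ) : ℝ) * p k ≤ ∑' k, c * g k :=
        hsummable.tsum_le_tsum hle (hg.mul_left c)
    _ = c * ∑' k, g k := tsum_mul_left
    _ ≤ c * (4 * √n) := by
        gcongr
        exact Real.tsum_le_of_sum_range_le hg_nonneg (sum_range_min_mul_rpow_le n)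
    _ = 4 * c * √n := by ring

/-- Truncated-expectation estimate for Boltzmann rejection samplers: if the
size distribution satisfies `p k ≤ c k^{-3/2}`, then the expected cost
`∑ min(k,n) p k` of one attempt (aborted above size `n`) is at most `4c√n`. -/
theorem stmt_11 (p : ℕ → ℝ) (hnn : ∀ k, 0 ≤ p k) (hsum : ∑' k, p k = 1)
    (c : ℝ) (hc : 0 < c)
    (hbound : ∀ k : ℕ, 1 ≤ k → p k ≤ c * (k : ℝ) ^ (-(3 / 2) : ℝ)) :
    ∀ n : ℕ, 1 ≤ n →
      Summable (fun k : ℕ => ((min k n : ℕ) : ℝ) * p k) ∧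
      ∑' k : ℕ, ((min k n : ℕ) : ℝ) * p k ≤ 4 * c * Real.sqrt n :=
  stmt_11_general p hnn c hc hbound
end
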